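/- Let T > 0, θ > 0, and let a:[0,T)→ℝ be continuous with a(t) ≥ 0 for all t∈[0,T), and suppose there exists δ∈(0,T) such that a(t) = 0 for all t∈[T−δ,T). Then the backward ODE (♦) admits exactly one solution, and this solution is positive (strictly positive on [0,T)). -/

import Mathlib

/-!
On `[T - δ, T)` the field is `θ ^ 2` whatever the state, so every solution equals
`θ ^ 2 (T - t)` there; since `f ≥ 0`, every solution is nonincreasing and therefore stays above
`θ ^ 2 δ` on `[0, T - δ]`. Away from `y = 0` the field is Lipschitz in `y`, uniformly in `t`
because `a` is bounded on the compact interval `[0, T - δ]`. Hence Picard–Lindelöf for the field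
clipped at `θ ^ 2 δ` gives a solution on `[0, T - δ]`, which continues linearly to `T`, and
uniqueness follows from a Gronwall argument: `(Y - Z) ^ 2 e^{2Kt}` is nondecreasing and vanishes
at `T - δ`.
-/

open MeasureTheory Set Filter Topology

/-- Absolute continuity of `Y` on the interval `[a,b]` (classical ε–δ definition over
finite families of non-overlapping subintervals). -/
def AbsContOn (Y : ℝ → ℝ) (a b : ℝ) : Prop :=
  ∀ ε > (0:ℝ), ∃ δ > (0:ℝ), ∀ n : ℕ, ∀ I : Fin n → ℝ × ℝ,
    (∀ i, a ≤ (I i).1 ∧ (I i).1 ≤ (I i).2 ∧ (I i).2 ≤ b) →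
    (∀ i j, i ≠ j → Disjoint (Set.Ioo (I i).1 (I i).2) (Set.Ioo (I j).1 (I j).2)) →
    (∑ i, ((I i).2 - (I i).1)) < δ →
    (∑ i, |Y (I i).2 - Y (I i).1|) < ε

/-- The right-hand side `f(t,y) = θ² y/(√y + a(t))²` for `y>0`, with
`f(t,0) = θ²` if `a(t)=0` and `f(t,0) = 0` otherwise. -/
noncomputable def fODE (θ : ℝ) (a : ℝ → ℝ) (t y : ℝ) : ℝ :=
  if 0 < y then θ ^ 2 * y / (Real.sqrt y + a t) ^ 2
  else if a t = 0 then θ ^ 2 else 0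

/-- A solution to the backward ODE (♦): `Y : [0,T] → [0,∞)` absolutely continuous,
right-differentiable on `[0,T)` with right-continuous right derivative,
`Y'₊(t) = −f(t,Y(t))` on `[0,T)`, and `Y(T) = 0`. -/
def DiamondSol (T θ : ℝ) (a : ℝ → ℝ) (Y : ℝ → ℝ) : Prop :=
  (∀ t ∈ Set.Icc 0 T, 0 ≤ Y t) ∧
  AbsContOn Y 0 T ∧
  (∀ t ∈ Set.Ico 0 T, HasDerivWithinAt Y (-(fODE θ a t (Y t))) (Set.Ici t) t) ∧
  (∀ t ∈ Set.Ico 0 T,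
      ContinuousWithinAt (fun s => fODE θ a s (Y s)) (Set.Ico t T) t) ∧
  Y T = 0

open Real

lemma antitoneOn_of_deriv_right_nonpos {f f' : ℝ → ℝ} {p q : ℝ}
    (hf : ContinuousOn f (Icc p q)) (hf' : ∀ x ∈ Ico p q, HasDerivWithinAt f (f' x) (Ici x) x)
    (hf'_nonpos : ∀ x ∈ Ico p q, f' x ≤ 0) : AntitoneOn f (Icc p q) := by
  intro x hx y hy hxy
  have hsub : Icc x y ⊆ Icc p q := Icc_subset_Icc hx.1 hy.2
  exact image_le_of_deriv_right_le_deriv_boundary (B := fun _ ↦ f x) (B' := fun _ ↦ 0)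
    (hf.mono hsub) (fun z hz ↦ hf' z ⟨hx.1.trans hz.1, hz.2.trans_le hy.2⟩) le_rfl
    continuousOn_const (fun z _ ↦ hasDerivWithinAt_const z _ (f x))
    (fun z hz ↦ hf'_nonpos z ⟨hx.1.trans hz.1, hz.2.trans_le hy.2⟩) ⟨hxy, le_rfl⟩

lemma monotoneOn_of_deriv_right_nonneg {f f' : ℝ → ℝ} {p q : ℝ}
    (hf : ContinuousOn f (Icc p q)) (hf' : ∀ x ∈ Ico p q, HasDerivWithinAt f (f' x) (Ici x) x)
    (hf'_nonneg : ∀ x ∈ Ico p q, 0 ≤ f' x) : MonotoneOn f (Icc p q) := by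
  intro x hx y hy hxy
  simpa using antitoneOn_of_deriv_right_nonpos hf.neg (fun z hz ↦ (hf' z hz).neg)
    (fun z hz ↦ neg_nonpos.2 (hf'_nonneg z hz)) hx hy hxy

lemma eqOn_zero_of_abs_deriv_right_le {u u' : ℝ → ℝ} {p q K : ℝ}
    (hu : ContinuousOn u (Icc p q)) (hu' : ∀ x ∈ Ico p q, HasDerivWithinAt u (u' x) (Ici x) x)
    (hK : ∀ x ∈ Ico p q, |u' x| ≤ K * |u x|) (hq : u q = 0) : EqOn u 0 (Icc p q) := by
  intro x hx
  set ψ : ℝ → ℝ := fun t ↦ u t ^ 2 * exp (2 * K * t)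
  have hψ' : ∀ t ∈ Ico p q, HasDerivWithinAt ψ
      ((2 * u t * u' t + 2 * K * u t ^ 2) * exp (2 * K * t)) (Ici t) t := by
    intro t ht
    have hexp : HasDerivAt (fun s ↦ exp (2 * K * s)) (exp (2 * K * t) * (2 * K)) t := by
      simpa using ((hasDerivAt_id t).const_mul (2 * K)).exp
    exact (((hu' t ht).fun_pow 2).mul hexp.hasDerivWithinAt).congr_deriv (by push_cast; ring)
  have hψ'_nonneg :
      ∀ t ∈ Ico p q, 0 ≤ (2 * u t * u' t + 2 * K * u t ^ 2) * exp (2 * K * t) := by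
    intro t ht
    have h : -(K * u t ^ 2) ≤ u t * u' t := by
      calc -(K * u t ^ 2) = -(|u t| * (K * |u t|)) := by rw [← sq_abs]; ring
        _ ≤ -(|u t| * |u' t|) := neg_le_neg (mul_le_mul_of_nonneg_left (hK t ht) (abs_nonneg _))
        _ ≤ u t * u' t := by rw [← abs_mul]; exact neg_abs_le _
    have := exp_pos (2 * K * t)
    nlinarith
  have hψ : ContinuousOn ψ (Icc p q) := (hu.pow 2).mul (by fun_prop)
  have hxq : ψ x ≤ ψ q :=
    monotoneOn_of_deriv_right_nonneg hψ hψ' hψ'_nonneg hx ⟨hx.1.trans hx.2, le_rfl⟩ hx.2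
  have hψq : ψ q = 0 := by simp [ψ, hq]
  have : u x ^ 2 * exp (2 * K * x) ≤ 0 := hψq ▸ hxq
  have hux : u x ^ 2 ≤ 0 := nonpos_of_mul_nonpos_left this (exp_pos _)
  simpa using hux.antisymm (sq_nonneg _)

lemma AbsContOn.continuousOn {Y : ℝ → ℝ} {a b : ℝ} (hY : AbsContOn Y a b) :
    ContinuousOn Y (Icc a b) := by
  intro t ht
  rw [Metric.continuousWithinAt_iff]
  intro ε hε
  obtain ⟨δ, hδ, hY⟩ := hY ε hε
  refine ⟨δ, hδ, fun s hs hst ↦ ?_⟩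
  have key := hY 1 (fun _ ↦ (min s t, max s t)) (fun _ ↦ ⟨le_min hs.1 ht.1, min_le_max,
    max_le hs.2 ht.2⟩) (fun i j hij ↦ absurd (Subsingleton.elim i j) hij)
    (by rwa [Fin.sum_univ_one, max_sub_min_eq_abs, ← Real.dist_eq, dist_comm])
  rw [Fin.sum_univ_one] at key
  rcases le_total s t with h | h
  · simpa [Real.dist_eq, h, abs_sub_comm] using key
  · simpa [Real.dist_eq, h] using key

lemma absContOn_of_abs_deriv_right_le {Y Y' : ℝ → ℝ} {a b C : ℝ}
    (hY : ContinuousOn Y (Icc a b)) (hY' : ∀ x ∈ Ico a b, HasDerivWithinAt Y (Y' x) (Ici x) x)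
    (hC : ∀ x ∈ Ico a b, |Y' x| ≤ C) : AbsContOn Y a b := by
  have hlip : ∀ x y, a ≤ x → x ≤ y → y ≤ b → |Y y - Y x| ≤ |C| * (y - x) :=
    fun x y hax hxy hyb ↦
    calc |Y y - Y x| ≤ C * (y - x) :=
          norm_image_sub_le_of_norm_deriv_right_le_segment (hY.mono (Icc_subset_Icc hax hyb))
            (fun z hz ↦ hY' z ⟨hax.trans hz.1, hz.2.trans_le hyb⟩)
            (fun z hz ↦ hC z ⟨hax.trans hz.1, hz.2.trans_le hyb⟩) y ⟨hxy, le_rfl⟩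
      _ ≤ |C| * (y - x) := mul_le_mul_of_nonneg_right (le_abs_self C) (sub_nonneg.2 hxy)
  intro ε hε
  refine ⟨ε / (|C| + 1), by positivity, fun n I hI _ hlen ↦ ?_⟩
  calc ∑ i, |Y (I i).2 - Y (I i).1| ≤ ∑ i, |C| * ((I i).2 - (I i).1) :=
        Finset.sum_le_sum fun i _ ↦ hlip _ _ (hI i).1 (hI i).2.1 (hI i).2.2
    _ = |C| * ∑ i, ((I i).2 - (I i).1) := by rw [Finset.mul_sum]
    _ ≤ |C| * (ε / (|C| + 1)) := mul_le_mul_of_nonneg_left hlen.le (abs_nonneg C)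
    _ < ε := by
        rw [mul_div_assoc', div_lt_iff₀ (by positivity)]
        linarith

/-- The branch `y > 0` of `fODE`, with `α` standing for `a t`. -/
noncomputable def fODEPos (θ α y : ℝ) : ℝ := θ ^ 2 * y / (√y + α) ^ 2

section Field

variable {θ α y : ℝ}

lemma fODE_of_pos (a : ℝ → ℝ) (t : ℝ) (hy : 0 < y) : fODE θ a t y = fODEPos θ (a t) y :=
  if_pos hy

lemma fODE_of_eq_zero {a : ℝ → ℝ} {t : ℝ} (ha : a t = 0) (y : ℝ) :
    fODE θ a t y = θ ^ 2 := by
  unfold fODE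
  split_ifs with hy
  · rw [ha, add_zero, sq_sqrt hy.le, mul_div_cancel_right₀ _ hy.ne']
  · rfl

lemma fODEPos_nonneg (hy : 0 ≤ y) : 0 ≤ fODEPos θ α y := by
  unfold fODEPos
  positivity

lemma fODEPos_le (hα : 0 ≤ α) (hy : 0 < y) : fODEPos θ α y ≤ θ ^ 2 := by
  have hsqrt : 0 < √y := sqrt_pos.2 hy
  have hy_le : y ≤ (√y + α) ^ 2 := by nlinarith [sq_sqrt hy.le, mul_nonneg hsqrt.le hα]
  unfold fODEPos
  rw [div_le_iff₀ (by positivity)]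
  exact mul_le_mul_of_nonneg_left hy_le (sq_nonneg θ)

lemma fODE_nonneg (a : ℝ → ℝ) (t y : ℝ) : 0 ≤ fODE θ a t y := by
  unfold fODE
  split_ifs with hy
  · exact fODEPos_nonneg hy.le
  · positivity
  · rfl

lemma fODE_le (a : ℝ → ℝ) (t y : ℝ) (ha : 0 ≤ a t) : fODE θ a t y ≤ θ ^ 2 := by
  unfold fODE
  split_ifs with hy
  · exact fODEPos_le ha hy
  · rfl
  · positivity

lemma hasDerivAt_fODEPos (hα : 0 ≤ α) (hy : 0 < y) :
    HasDerivAt (fODEPos θ α) (θ ^ 2 * α / (√y + α) ^ 3) y := by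
  have hsqrt : 0 < √y := sqrt_pos.2 hy
  have hden : HasDerivAt (fun z ↦ (√z + α) ^ 2) (2 * (√y + α) * (1 / (2 * √y))) y := by
    simpa using ((hasDerivAt_sqrt hy.ne').add_const α).fun_pow 2
  refine (((hasDerivAt_id' y).const_mul (θ ^ 2)).div hden (by positivity)).congr_deriv ?_
  field_simp
  linear_combination θ ^ 2 * sq_sqrt hy.le

lemma abs_fODEPos_sub_le {c A z : ℝ} (hc : 0 < c) (hα : 0 ≤ α) (hαA : α ≤ A)
    (hy : c ≤ y) (hz : c ≤ z) :
    |fODEPos θ α y - fODEPos θ α z| ≤ θ ^ 2 * A / √c ^ 3 * |y - z| := by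
  have hsqrt : 0 < √c := sqrt_pos.2 hc
  have hA : 0 ≤ A := hα.trans hαA
  have hderiv : ∀ x ∈ Ici c, ‖θ ^ 2 * α / (√x + α) ^ 3‖ ≤ θ ^ 2 * A / √c ^ 3 := by
    intro x hx
    have hcx : √c ≤ √x := sqrt_le_sqrt hx
    rw [Real.norm_eq_abs, abs_of_nonneg (by positivity)]
    exact div_le_div₀ (by positivity) (by gcongr) (by positivity)
      (pow_le_pow_left₀ hsqrt.le (by linarith) 3)
  simpa [Real.norm_eq_abs] using Convex.norm_image_sub_le_of_norm_hasDerivWithin_le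
    (fun x hx ↦ (hasDerivAt_fODEPos hα (hc.trans_le hx)).hasDerivWithinAt) hderiv
    (convex_Ici c) hz hy

lemma lipschitzWith_fODEPos_max {c A : ℝ} (hc : 0 < c) (hα : 0 ≤ α) (hαA : α ≤ A) :
    LipschitzWith (θ ^ 2 * A / √c ^ 3).toNNReal (fun y ↦ fODEPos θ α (max y c)) := by
  have hL : 0 ≤ θ ^ 2 * A / √c ^ 3 := by have := hα.trans hαA; positivity
  refine LipschitzWith.of_dist_le_mul fun y z ↦ ?_
  rw [Real.dist_eq, Real.dist_eq, coe_toNNReal _ hL]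
  calc _ ≤ θ ^ 2 * A / √c ^ 3 * |max y c - max z c| :=
        abs_fODEPos_sub_le hc hα hαA (le_max_right y c) (le_max_right z c)
    _ ≤ θ ^ 2 * A / √c ^ 3 * |y - z| :=
        mul_le_mul_of_nonneg_left (abs_max_sub_max_le_abs y z c) hL

end Field

structure IsFODEPosSol (θ : ℝ) (a : ℝ → ℝ) (p q c : ℝ) (Y : ℝ → ℝ) : Prop where
  continuousOn : ContinuousOn Y (Icc p q)
  le : ∀ t ∈ Icc p q, c ≤ Y t
  hasDerivWithinAt : ∀ t ∈ Ico p q, HasDerivWithinAt Y (-fODEPos θ (a t) (Y t)) (Ici t) t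

section Backward

variable {θ p q c A : ℝ} {a : ℝ → ℝ}

lemma isPicardLindelof_fODEPos_max (hpq : p ≤ q) (hac : ContinuousOn a (Icc p q))
    (ha0 : ∀ t ∈ Icc p q, 0 ≤ a t) (hA : ∀ t ∈ Icc p q, a t ≤ A) (hc : 0 < c) :
    IsPicardLindelof (fun t y ↦ -fODEPos θ (a t) (max y c)) (tmin := p) (tmax := q)
      ⟨q, hpq, le_rfl⟩ c (θ ^ 2 * (q - p)).toNNReal 0 (θ ^ 2).toNNReal
      (θ ^ 2 * A / √c ^ 3).toNNReal where
  lipschitzOnWith t ht :=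
    (lipschitzWith_fODEPos_max hc (ha0 t ht) (hA t ht)).neg.lipschitzOnWith
  continuousOn y _ := by
    have hmax : 0 < √(max y c) := sqrt_pos.2 (lt_max_of_lt_right hc)
    refine (continuousOn_const.div ((continuousOn_const.add hac).pow 2) fun t ht ↦ ?_).neg
    have := ha0 t ht
    change (√(max y c) + a t) ^ 2 ≠ 0
    positivity
  norm_le t ht y _ := by
    rw [norm_neg, Real.norm_eq_abs, coe_toNNReal _ (sq_nonneg θ),
      abs_of_nonneg (fODEPos_nonneg (hc.le.trans (le_max_right y c)))]
    exact fODEPos_le (ha0 t ht) (lt_max_of_lt_right hc)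
  mul_max_le := by
    rw [coe_toNNReal _ (sq_nonneg θ), NNReal.coe_zero, sub_zero,
      coe_toNNReal _ (mul_nonneg (sq_nonneg θ) (sub_nonneg.2 hpq))]
    simp [hpq]

lemma exists_isFODEPosSol (hpq : p ≤ q) (hac : ContinuousOn a (Icc p q))
    (ha0 : ∀ t ∈ Icc p q, 0 ≤ a t) (hc : 0 < c) :
    ∃ Y : ℝ → ℝ, Y q = c ∧ IsFODEPosSol θ a p q c Y := by
  obtain ⟨A, hA⟩ := isCompact_Icc.bddAbove_image hac
  obtain ⟨Y, hYq, hY'⟩ := (isPicardLindelof_fODEPos_max (θ := θ) hpq hac ha0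
    (fun t ht ↦ hA (mem_image_of_mem a ht)) hc).exists_eq_forall_mem_Icc_hasDerivWithinAt₀
  have hYcont : ContinuousOn Y (Icc p q) := fun t ht ↦ (hY' t ht).continuousWithinAt
  have hY'_right : ∀ t ∈ Ico p q,
      HasDerivWithinAt Y (-fODEPos θ (a t) (max (Y t) c)) (Ici t) t := fun t ht ↦
    (hY' t (Ico_subset_Icc_self ht)).mono_of_mem_nhdsWithin (Icc_mem_nhdsGE_of_mem ht)
  have hYc : ∀ t ∈ Icc p q, c ≤ Y t := fun t ht ↦
    hYq ▸ antitoneOn_of_deriv_right_nonpos hYcont hY'_right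
      (fun s _ ↦ neg_nonpos.2 (fODEPos_nonneg (hc.le.trans (le_max_right _ c))))
      ht ⟨ht.1.trans ht.2, le_rfl⟩ ht.2
  refine ⟨Y, hYq, hYcont, hYc, fun t ht ↦ ?_⟩
  simpa [max_eq_left (hYc t (Ico_subset_Icc_self ht))] using hY'_right t ht

lemma IsFODEPosSol.eqOn {Y Z : ℝ → ℝ} (hY : IsFODEPosSol θ a p q c Y)
    (hZ : IsFODEPosSol θ a p q c Z) (hac : ContinuousOn a (Icc p q))
    (ha0 : ∀ t ∈ Icc p q, 0 ≤ a t) (hc : 0 < c) (hq : Y q = Z q) : EqOn Y Z (Icc p q) := by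
  obtain ⟨A, hA⟩ := isCompact_Icc.bddAbove_image hac
  have hYZ := eqOn_zero_of_abs_deriv_right_le (K := θ ^ 2 * A / √c ^ 3)
    (hY.continuousOn.sub hZ.continuousOn)
    (fun t ht ↦ (hY.hasDerivWithinAt t ht).sub (hZ.hasDerivWithinAt t ht)) (fun t ht ↦ ?_)
    (by simp [hq])
  · exact fun t ht ↦ sub_eq_zero.1 (hYZ ht)
  · have ht' := Ico_subset_Icc_self ht
    rw [neg_sub_neg, abs_sub_comm]
    exact abs_fODEPos_sub_le hc (ha0 t ht') (hA (mem_image_of_mem a ht')) (hY.le t ht')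
      (hZ.le t ht')

end Backward

namespace DiamondSol

variable {T θ δ : ℝ} {a Y : ℝ → ℝ}

lemma of_deriv_right (hac : ContinuousOn a (Ico 0 T)) (ha0 : ∀ t ∈ Ico 0 T, 0 ≤ a t)
    (hY : ContinuousOn Y (Icc 0 T)) (hpos : ∀ t ∈ Ico 0 T, 0 < Y t) (hT : Y T = 0)
    (hY' : ∀ t ∈ Ico 0 T, HasDerivWithinAt Y (-fODE θ a t (Y t)) (Ici t) t) :
    DiamondSol T θ a Y := by
  have hf : EqOn (fun s ↦ fODE θ a s (Y s)) (fun s ↦ fODEPos θ (a s) (Y s)) (Ico 0 T) :=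
    fun s hs ↦ fODE_of_pos a s (hpos s hs)
  have hfcont : ContinuousOn (fun s ↦ fODEPos θ (a s) (Y s)) (Ico 0 T) := by
    have hY₀ := hY.mono Ico_subset_Icc_self
    refine (continuousOn_const.mul hY₀).div ((hY₀.sqrt.add hac).pow 2) fun s hs ↦ ?_
    have := sqrt_pos.2 (hpos s hs)
    have := ha0 s hs
    positivity
  refine ⟨fun t ht ↦ ?_, absContOn_of_abs_deriv_right_le (C := θ ^ 2) hY hY' fun t ht ↦ ?_,
    hY', fun t ht ↦ ?_, hT⟩
  · rcases ht.2.eq_or_lt with rfl | htT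
    · exact hT.ge
    · exact (hpos t ⟨ht.1, htT⟩).le
  · rw [abs_neg, abs_of_nonneg (fODE_nonneg a t _)]
    exact fODE_le a t _ (ha0 t ht)
  · have hsub : Ico t T ⊆ Ico 0 T := Ico_subset_Ico_left ht.1
    exact ((hfcont t ht).mono hsub).congr (fun s hs ↦ hf (hsub hs)) (hf ht)

lemma antitoneOn (hY : DiamondSol T θ a Y) : AntitoneOn Y (Icc 0 T) :=
  antitoneOn_of_deriv_right_nonpos hY.2.1.continuousOn hY.2.2.1
    fun t _ ↦ neg_nonpos.2 (fODE_nonneg a t _)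

lemma eqOn_of_eq_zero (hY : DiamondSol T θ a Y) (hδT : δ ≤ T)
    (haz : ∀ t ∈ Ico (T - δ) T, a t = 0) :
    EqOn Y (fun t ↦ θ ^ 2 * (T - t)) (Icc (T - δ) T) := by
  have hsub : Icc (T - δ) T ⊆ Icc 0 T := Icc_subset_Icc_left (by linarith)
  have hconst := constant_of_has_deriv_right_zero (f := fun t ↦ Y t + θ ^ 2 * t)
    ((hY.2.1.continuousOn.mono hsub).add (by fun_prop)) fun t ht ↦ by
      have hYt := hY.2.2.1 t ⟨(hsub (Ico_subset_Icc_self ht)).1, ht.2⟩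
      rw [fODE_of_eq_zero (haz t ht)] at hYt
      exact (hYt.add ((hasDerivAt_id' t).const_mul (θ ^ 2)).hasDerivWithinAt).congr_deriv
        (by ring)
  intro t ht
  have hT := hconst T ⟨ht.1.trans ht.2, le_rfl⟩
  have ht' := hconst t ht
  simp only [hY.2.2.2.2] at hT ht'
  linarith

lemma isFODEPosSol (hY : DiamondSol T θ a Y) (hθ : θ ≠ 0) (hδ : δ ∈ Ioo 0 T)
    (haz : ∀ t ∈ Ico (T - δ) T, a t = 0) : IsFODEPosSol θ a 0 (T - δ) (θ ^ 2 * δ) Y := by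
  have hb : T - δ ∈ Icc 0 T := ⟨by linarith [hδ.2], by linarith [hδ.1]⟩
  have hYb : Y (T - δ) = θ ^ 2 * δ := by
    rw [hY.eqOn_of_eq_zero hδ.2.le haz ⟨le_rfl, hb.2⟩]
    ring
  have hsub : Icc 0 (T - δ) ⊆ Icc 0 T := Icc_subset_Icc_right hb.2
  have hle : ∀ t ∈ Icc 0 (T - δ), θ ^ 2 * δ ≤ Y t := fun t ht ↦
    hYb ▸ hY.antitoneOn (hsub ht) hb ht.2
  refine ⟨hY.2.1.continuousOn.mono hsub, hle, fun t ht ↦ ?_⟩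
  have hpos : 0 < Y t := by
    have := hδ.1
    exact (by positivity : 0 < θ ^ 2 * δ).trans_le (hle t (Ico_subset_Icc_self ht))
  simpa only [fODE_of_pos a t hpos] using hY.2.2.1 t ⟨ht.1, ht.2.trans_le hb.2⟩

lemma eqOn {Z : ℝ → ℝ} (hY : DiamondSol T θ a Y) (hZ : DiamondSol T θ a Z) (hθ : θ ≠ 0)
    (hac : ContinuousOn a (Ico 0 T)) (ha0 : ∀ t ∈ Ico 0 T, 0 ≤ a t) (hδ : δ ∈ Ioo 0 T)
    (haz : ∀ t ∈ Ico (T - δ) T, a t = 0) : EqOn Y Z (Icc 0 T) := by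
  have hsub : Icc 0 (T - δ) ⊆ Ico 0 T :=
    fun t ht ↦ ⟨ht.1, ht.2.trans_lt (by linarith [hδ.1])⟩
  have hYlin := hY.eqOn_of_eq_zero hδ.2.le haz
  have hZlin := hZ.eqOn_of_eq_zero hδ.2.le haz
  intro t ht
  rcases le_total t (T - δ) with htb | hbt
  · have hbT : T - δ ∈ Icc (T - δ) T := ⟨le_rfl, by linarith [hδ.1]⟩
    have := hδ.1
    exact (hY.isFODEPosSol hθ hδ haz).eqOn (hZ.isFODEPosSol hθ hδ haz) (hac.mono hsub)
      (fun s hs ↦ ha0 s (hsub hs)) (by positivity) ((hYlin hbT).trans (hZlin hbT).symm)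
      ⟨ht.1, htb⟩
  · exact (hYlin ⟨hbt, ht.2⟩).trans (hZlin ⟨hbt, ht.2⟩).symm

end DiamondSol

theorem exists_pos_diamondSol {T θ δ : ℝ} {a : ℝ → ℝ} (hθ : θ ≠ 0)
    (hac : ContinuousOn a (Ico 0 T)) (ha0 : ∀ t ∈ Ico 0 T, 0 ≤ a t) (hδ : δ ∈ Ioo 0 T)
    (haz : ∀ t ∈ Ico (T - δ) T, a t = 0) :
    ∃ Y, DiamondSol T θ a Y ∧ ∀ t ∈ Ico 0 T, 0 < Y t := by
  set b := T - δ with hb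
  have hb0 : 0 ≤ b := by linarith [hδ.2]
  have hbT : b < T := by linarith [hδ.1]
  have hsub : Icc 0 b ⊆ Ico 0 T := fun t ht ↦ ⟨ht.1, ht.2.trans_lt hbT⟩
  have hc : 0 < θ ^ 2 * δ := by
    have := hδ.1
    positivity
  obtain ⟨α, hαb, hα⟩ := exists_isFODEPosSol (θ := θ) hb0 (hac.mono hsub)
    (fun t ht ↦ ha0 t (hsub ht)) hc
  set Y : ℝ → ℝ := fun t ↦ if t ≤ b then α t else θ ^ 2 * (T - t)
  have hYα : EqOn Y α (Icc 0 b) := fun t ht ↦ if_pos ht.2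
  have hYlin : ∀ t, b ≤ t → Y t = θ ^ 2 * (T - t) := by
    intro t hbt
    rcases hbt.eq_or_lt with h | h
    · rw [← h, hYα ⟨hb0, le_rfl⟩, hαb, hb]
      ring
    · exact if_neg h.not_ge
  have hpos : ∀ t ∈ Ico 0 T, 0 < Y t := by
    intro t ht
    rcases le_total t b with htb | hbt
    · rw [hYα ⟨ht.1, htb⟩]
      exact hc.trans_le (hα.le t ⟨ht.1, htb⟩)
    · rw [hYlin t hbt]
      have := sub_pos.2 ht.2
      positivity
  have hYcont : ContinuousOn Y (Icc 0 T) := by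
    rw [← Icc_union_Icc_eq_Icc hb0 hbT.le]
    exact (hα.continuousOn.congr hYα).union_of_isClosed
      ((by fun_prop : ContinuousOn (fun t ↦ θ ^ 2 * (T - t)) _).congr fun t ht ↦ hYlin t ht.1)
      isClosed_Icc isClosed_Icc
  have hYT : Y T = 0 := by
    rw [hYlin T hbT.le]
    ring
  refine ⟨Y, DiamondSol.of_deriv_right hac ha0 hYcont hpos hYT fun t ht ↦ ?_, hpos⟩
  rcases lt_or_ge t b with htb | hbt
  · rw [fODE_of_pos a t (hpos t ht), hYα ⟨ht.1, htb.le⟩]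
    exact (hα.hasDerivWithinAt t ⟨ht.1, htb⟩).congr_of_eventuallyEq
      (eventually_of_mem (Ico_mem_nhdsGE htb) fun s hs ↦ hYα ⟨ht.1.trans hs.1, hs.2.le⟩)
      (hYα ⟨ht.1, htb.le⟩)
  · rw [fODE_of_eq_zero (haz t ⟨hbt, ht.2⟩)]
    exact ((((hasDerivAt_id' t).const_sub T).const_mul (θ ^ 2)).hasDerivWithinAt.congr
      (fun s hs ↦ hYlin s (hbt.trans hs)) (hYlin t hbt)).congr_deriv (by ring)

theorem stmt12_general (T θ : ℝ) (hθ : 0 < θ)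
    (a : ℝ → ℝ) (hac : ContinuousOn a (Set.Ico 0 T))
    (ha0 : ∀ t ∈ Set.Ico 0 T, 0 ≤ a t)
    (hδ : ∃ δ ∈ Set.Ioo 0 T, ∀ t ∈ Set.Ico (T - δ) T, a t = 0) :
    ∃ Y : ℝ → ℝ, DiamondSol T θ a Y ∧ (∀ t ∈ Set.Ico 0 T, 0 < Y t) ∧
      ∀ Y' : ℝ → ℝ, DiamondSol T θ a Y' → Set.EqOn Y' Y (Set.Icc 0 T) := by
  obtain ⟨δ, hδ, haz⟩ := hδ
  obtain ⟨Y, hY, hpos⟩ := exists_pos_diamondSol hθ.ne' hac ha0 hδ haz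
  exact ⟨Y, hY, hpos, fun Z hZ ↦ hZ.eqOn hY hθ.ne' hac ha0 hδ haz⟩

/-- if `a ≥ 0` is continuous on `[0,T)` and vanishes on `[T−δ,T)` for some
`δ ∈ (0,T)`, then the backward ODE (♦) admits exactly one solution, and it is positive
on `[0,T)`. -/
theorem stmt12 (T θ : ℝ) (hT : 0 < T) (hθ : 0 < θ)
    (a : ℝ → ℝ) (hac : ContinuousOn a (Set.Ico 0 T))
    (ha0 : ∀ t ∈ Set.Ico 0 T, 0 ≤ a t)
    (hδ : ∃ δ ∈ Set.Ioo 0 T, ∀ t ∈ Set.Ico (T - δ) T, a t = 0) :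
    ∃ Y : ℝ → ℝ, DiamondSol T θ a Y ∧ (∀ t ∈ Set.Ico 0 T, 0 < Y t) ∧
      ∀ Y' : ℝ → ℝ, DiamondSol T θ a Y' → Set.EqOn Y' Y (Set.Icc 0 T) :=
  stmt12_general T θ hθ a hac ha0 hδ
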